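/- arXiv:1105.4002 — 6 statements merged into one kernel-verified Lean document; each statement's English description precedes it below -/
import Mathlib

section
/- Let f : ℝⁿ → ℝ be differentiable, μ-strongly convex and L-smooth with 0 < μ ≤ L, and let x* be a global minimizer of f. Define the gradient-method iterates by x_{k+1} = x_k − (1/L)∇f(x_k) starting from any x_0. Then for every k ≥ 0, f(x_k) − f(x*) ≤ (1 − μ/L)^k · (f(x_0) − f(x*)). -/
open scoped RealInnerProductSpace

/-!
A step of length `1/L` decreases `f` by at least `‖∇f‖² / (2L)` (smoothness), while strong
convexity gives the Polyak–Łojasiewicz bound `f y - f z ≤ ‖∇f y‖² / (2μ)` for every `z`.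
Together they contract the optimality gap by the factor `1 - μ/L` at each step.
-/

section GradientMethod

variable {E : Type*} [NormedAddCommGroup E] [InnerProductSpace ℝ E]

/-- The quadratic `d ↦ ⟪g, d⟫ + μ/2 ‖d‖²` is minimized at `d = -g/μ`. -/
lemma neg_norm_sq_div_le_inner_add_mul_norm_sq {μ : ℝ} (hμ : 0 < μ) (g d : E) :
    -(‖g‖ ^ 2 / (2 * μ)) ≤ ⟪g, d⟫ + μ / 2 * ‖d‖ ^ 2 := by
  have hsq : ‖g + μ • d‖ ^ 2 = ‖g‖ ^ 2 + 2 * μ * ⟪g, d⟫ + μ ^ 2 * ‖d‖ ^ 2 := by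
    rw [norm_add_sq_real, real_inner_smul_right, norm_smul, Real.norm_of_nonneg hμ.le]
    ring
  have hnonneg : 0 ≤ ‖g + μ • d‖ ^ 2 / (2 * μ) := by positivity
  rw [hsq] at hnonneg
  have hsplit : (‖g‖ ^ 2 + 2 * μ * ⟪g, d⟫ + μ ^ 2 * ‖d‖ ^ 2) / (2 * μ)
      = ‖g‖ ^ 2 / (2 * μ) + (⟪g, d⟫ + μ / 2 * ‖d‖ ^ 2) := by
    field_simp
    ring
  linarith

variable {f : E → ℝ} {f' : E → E}

lemma sub_le_norm_sq_div_of_strongly_convex {μ : ℝ} (hμ : 0 < μ)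
    (hsc : ∀ x y, f x ≥ f y + ⟪f' y, x - y⟫ + μ / 2 * ‖x - y‖ ^ 2) (y z : E) :
    f y - f z ≤ ‖f' y‖ ^ 2 / (2 * μ) := by
  have := neg_norm_sq_div_le_inner_add_mul_norm_sq hμ (f' y) (z - y)
  linarith [hsc z y]

lemma apply_gradient_step_le_of_smooth {L : ℝ} (hL : 0 < L)
    (hsm : ∀ x y, f x ≤ f y + ⟪f' y, x - y⟫ + L / 2 * ‖x - y‖ ^ 2) (y : E) :
    f (y - (1 / L) • f' y) ≤ f y - ‖f' y‖ ^ 2 / (2 * L) := by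
  have hstep : y - (1 / L) • f' y - y = -((1 / L) • f' y) := by abel
  have hinner : ⟪f' y, -((1 / L) • f' y)⟫ = -(‖f' y‖ ^ 2 / L) := by
    rw [inner_neg_right, real_inner_smul_right, real_inner_self_eq_norm_sq]
    ring
  have hnorm : ‖-((1 / L) • f' y)‖ ^ 2 = ‖f' y‖ ^ 2 / L ^ 2 := by
    rw [norm_neg, norm_smul, Real.norm_of_nonneg (by positivity)]
    ring
  calc f (y - (1 / L) • f' y)
      ≤ f y + -(‖f' y‖ ^ 2 / L) + L / 2 * (‖f' y‖ ^ 2 / L ^ 2) := by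
        simpa only [hstep, hinner, hnorm] using hsm (y - (1 / L) • f' y) y
    _ = f y - ‖f' y‖ ^ 2 / (2 * L) := by
        field_simp
        ring

lemma apply_gradient_step_sub_le_mul_sub {μ L : ℝ} (hμ : 0 < μ) (hμL : μ ≤ L)
    (hsc : ∀ x y, f x ≥ f y + ⟪f' y, x - y⟫ + μ / 2 * ‖x - y‖ ^ 2)
    (hsm : ∀ x y, f x ≤ f y + ⟪f' y, x - y⟫ + L / 2 * ‖x - y‖ ^ 2) (y z : E) :
    f (y - (1 / L) • f' y) - f z ≤ (1 - μ / L) * (f y - f z) := by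
  have hL : 0 < L := hμ.trans_le hμL
  have hdescent := apply_gradient_step_le_of_smooth hL hsm y
  have hPL := sub_le_norm_sq_div_of_strongly_convex hμ hsc y z
  have hPL' : μ / L * (f y - f z) ≤ ‖f' y‖ ^ 2 / (2 * L) := by
    calc μ / L * (f y - f z) ≤ μ / L * (‖f' y‖ ^ 2 / (2 * μ)) := by gcongr
      _ = ‖f' y‖ ^ 2 / (2 * L) := by
        field_simp
  linarith

end GradientMethod

theorem gradient_method_linear_convergence_general
    (n : ℕ) (f : EuclideanSpace ℝ (Fin n) → ℝ)
    (f' : EuclideanSpace ℝ (Fin n) → EuclideanSpace ℝ (Fin n))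
    (μ L : ℝ) (hμ : 0 < μ) (hμL : μ ≤ L)
    (hsc : ∀ x y : EuclideanSpace ℝ (Fin n),
      f x ≥ f y + ⟪f' y, x - y⟫ + μ / 2 * ‖x - y‖ ^ 2)
    (hsm : ∀ x y : EuclideanSpace ℝ (Fin n),
      f x ≤ f y + ⟪f' y, x - y⟫ + L / 2 * ‖x - y‖ ^ 2)
    (xstar : EuclideanSpace ℝ (Fin n))
    (x : ℕ → EuclideanSpace ℝ (Fin n))
    (hiter : ∀ k : ℕ, x (k + 1) = x k - (1 / L) • f' (x k)) :
    ∀ k : ℕ, f (x k) - f xstar ≤ (1 - μ / L) ^ k * (f (x 0) - f xstar) := by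
  have hrate : 0 ≤ 1 - μ / L := by
    rw [sub_nonneg]
    exact div_le_one_of_le₀ hμL (hμ.trans_le hμL).le
  intro k
  refine le_geom (u := fun k ↦ f (x k) - f xstar) hrate k fun j _ ↦ ?_
  simpa only [hiter j] using apply_gradient_step_sub_le_mul_sub hμ hμL hsc hsm (x j) xstar

/-- Linear convergence of the constant-step gradient method for a
μ-strongly convex, L-smooth function. -/
theorem gradient_method_linear_convergence
    (n : ℕ) (f : EuclideanSpace ℝ (Fin n) → ℝ)
    (f' : EuclideanSpace ℝ (Fin n) → EuclideanSpace ℝ (Fin n))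
    (hgrad : ∀ x, HasGradientAt f (f' x) x)
    (μ L : ℝ) (hμ : 0 < μ) (hμL : μ ≤ L)
    (hsc : ∀ x y : EuclideanSpace ℝ (Fin n),
      f x ≥ f y + ⟪f' y, x - y⟫ + μ / 2 * ‖x - y‖ ^ 2)
    (hsm : ∀ x y : EuclideanSpace ℝ (Fin n),
      f x ≤ f y + ⟪f' y, x - y⟫ + L / 2 * ‖x - y‖ ^ 2)
    (xstar : EuclideanSpace ℝ (Fin n)) (hmin : ∀ x, f xstar ≤ f x)
    (x : ℕ → EuclideanSpace ℝ (Fin n))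
    (hiter : ∀ k : ℕ, x (k + 1) = x k - (1 / L) • f' (x k)) :
    ∀ k : ℕ, f (x k) - f xstar ≤ (1 - μ / L) ^ k * (f (x 0) - f xstar) :=
  gradient_method_linear_convergence_general n f f' μ L hμ hμL hsc hsm xstar x hiter
end

section
/- Let f : ℝⁿ → ℝ be differentiable and μ-strongly convex with 0 < μ, and suppose ∇f is Lipschitz continuous with constant L where μ ≤ L. Let Q be the nonnegative orthant and let x* ∈ Q satisfy f(x*) ≤ f(x) for all x ∈ Q. Define the projected gradient iterates x_{k+1} = P(x_k − (1/L)∇f(x_k)) starting from any x_0 ∈ Q. Then for every k ≥ 0, ‖x_k − x*‖² ≤ (1 − μ/L)^k · ‖x_0 − x*‖². -/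
open scoped RealInnerProductSpace

/-!
Strong convexity makes `∇f` strongly monotone, and `L`-Lipschitz continuity of `∇f` together
with convexity makes it co-coercive: `‖∇f a - ∇f b‖² ≤ L ⟪∇f a - ∇f b, a - b⟫`. Expanding the
square, these two facts make the gradient step `x ↦ x - (1/L) ∇f x` a contraction with
`‖·‖²`-factor `1 - μ/L`. The projection onto the orthant is nonexpansive, and by the first-order
optimality condition `x*` is a fixed point of the projected gradient map, so each iteration
shrinks `‖x_k - x*‖²` by that factor.
-/

section SmoothConvex

variable {E : Type*} [NormedAddCommGroup E] [InnerProductSpace ℝ E]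
  {f : E → ℝ} {f' : E → E} {L μ : ℝ}

theorem HasGradientAt.hasDerivAt_comp_add_smul [CompleteSpace E] {g x d : E} {t : ℝ}
    (h : HasGradientAt f g (x + t • d)) :
    HasDerivAt (fun s : ℝ => f (x + s • d)) ⟪g, d⟫ t := by
  have hline : HasDerivAt (fun s : ℝ => x + s • d) d t := by
    simpa using ((hasDerivAt_id t).smul_const d).const_add x
  have hcomp := h.hasFDerivAt.comp_hasDerivAt t hline
  simp only [InnerProductSpace.toDual_apply_apply] at hcomp
  exact hcomp

theorem le_add_inner_add_sq_of_lipschitz_gradient [CompleteSpace E]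
    (hgrad : ∀ x, HasGradientAt f (f' x) x) (hlip : ∀ x y, ‖f' x - f' y‖ ≤ L * ‖x - y‖)
    (x y : E) : f y ≤ f x + ⟪f' x, y - x⟫ + L / 2 * ‖y - x‖ ^ 2 := by
  set d := y - x
  have hlhs (t : ℝ) : HasDerivAt (fun s : ℝ => f (x + s • d) - s * ⟪f' x, d⟫)
      (⟪f' (x + t • d), d⟫ - ⟪f' x, d⟫) t :=
    (hgrad _).hasDerivAt_comp_add_smul.sub (by simpa using (hasDerivAt_id t).mul_const ⟪f' x, d⟫)
  have hrhs (t : ℝ) : HasDerivAt (fun s : ℝ => f x + L / 2 * s ^ 2 * ‖d‖ ^ 2)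
      (L * t * ‖d‖ ^ 2) t := by
    refine ((((hasDerivAt_pow 2 t).const_mul (L / 2)).mul_const (‖d‖ ^ 2)).const_add
      (f x)).congr_deriv ?_
    simp only [Nat.cast_ofNat, Nat.add_one_sub_one, pow_one]
    ring
  have hslope : ∀ t ∈ Set.Ico (0 : ℝ) 1,
      ⟪f' (x + t • d), d⟫ - ⟪f' x, d⟫ ≤ L * t * ‖d‖ ^ 2 := by
    intro t ht
    calc ⟪f' (x + t • d), d⟫ - ⟪f' x, d⟫ = ⟪f' (x + t • d) - f' x, d⟫ := (inner_sub_left ..).symm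
      _ ≤ ‖f' (x + t • d) - f' x‖ * ‖d‖ := real_inner_le_norm _ _
      _ ≤ L * ‖t • d‖ * ‖d‖ := by
        gcongr
        simpa using hlip (x + t • d) x
      _ = L * t * ‖d‖ ^ 2 := by rw [norm_smul, Real.norm_of_nonneg ht.1]; ring
  have hend := image_le_of_deriv_right_le_deriv_boundary
    (fun t _ => (hlhs t).continuousAt.continuousWithinAt) (fun t _ => (hlhs t).hasDerivWithinAt)
    (by simp) (fun t _ => (hrhs t).continuousAt.continuousWithinAt)
    (fun t _ => (hrhs t).hasDerivWithinAt) hslope (Set.right_mem_Icc.2 zero_le_one)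
  simp only [one_smul, one_mul, one_pow, mul_one] at hend
  rw [show x + d = y by simp [d]] at hend
  linarith

/-- Convexity improved by the descent lemma, tested at `v - (1/L) (∇f v - ∇f u)`. -/
theorem add_inner_add_sq_norm_sub_le (hL : 0 < L) (hconv : ∀ a b, f a + ⟪f' a, b - a⟫ ≤ f b)
    (hdesc : ∀ a b, f b ≤ f a + ⟪f' a, b - a⟫ + L / 2 * ‖b - a‖ ^ 2) (u v : E) :
    f u + ⟪f' u, v - u⟫ + 1 / (2 * L) * ‖f' v - f' u‖ ^ 2 ≤ f v := by
  set w := (1 / L) • (f' v - f' u)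
  have h := (hconv u (v - w)).trans (hdesc v (v - w))
  rw [sub_right_comm, inner_sub_right, sub_sub_cancel_left, inner_neg_right, norm_neg] at h
  have hinner : ⟪f' v, w⟫ - ⟪f' u, w⟫ = 1 / L * ‖f' v - f' u‖ ^ 2 := by
    rw [← inner_sub_left, real_inner_smul_right, real_inner_self_eq_norm_sq]
  have hnorm : L / 2 * ‖w‖ ^ 2 = 1 / L * ‖f' v - f' u‖ ^ 2 - 1 / (2 * L) * ‖f' v - f' u‖ ^ 2 := by
    rw [norm_smul, mul_pow, Real.norm_of_nonneg (by positivity)]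
    field_simp
    ring
  linarith

theorem inv_mul_sq_norm_sub_le_inner (hL : 0 < L) (hconv : ∀ a b, f a + ⟪f' a, b - a⟫ ≤ f b)
    (hdesc : ∀ a b, f b ≤ f a + ⟪f' a, b - a⟫ + L / 2 * ‖b - a‖ ^ 2) (a b : E) :
    1 / L * ‖f' a - f' b‖ ^ 2 ≤ ⟪f' a - f' b, a - b⟫ := by
  have hab := add_inner_add_sq_norm_sub_le hL hconv hdesc a b
  have hba := add_inner_add_sq_norm_sub_le hL hconv hdesc b a
  rw [norm_sub_rev] at hab
  have hinner : ⟪f' a - f' b, a - b⟫ = -⟪f' a, b - a⟫ - ⟪f' b, a - b⟫ := by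
    rw [inner_sub_left, ← neg_sub a b, inner_neg_right]
    ring
  have hhalf : 1 / L * ‖f' a - f' b‖ ^ 2 = 2 * (1 / (2 * L) * ‖f' a - f' b‖ ^ 2) := by
    field_simp
  linarith

theorem mul_sq_norm_sub_le_inner
    (hsc : ∀ x y, f x ≥ f y + ⟪f' y, x - y⟫ + μ / 2 * ‖x - y‖ ^ 2) (a b : E) :
    μ * ‖a - b‖ ^ 2 ≤ ⟪f' a - f' b, a - b⟫ := by
  have hab := hsc a b
  have hba := hsc b a
  rw [← neg_sub a b, inner_neg_right, norm_neg] at hba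
  rw [inner_sub_left]
  linarith

theorem add_inner_le_of_strongly_convex (hμ : 0 ≤ μ)
    (hsc : ∀ x y, f x ≥ f y + ⟪f' y, x - y⟫ + μ / 2 * ‖x - y‖ ^ 2) (a b : E) :
    f a + ⟪f' a, b - a⟫ ≤ f b := by
  have := hsc b a
  have : 0 ≤ μ / 2 * ‖b - a‖ ^ 2 := by positivity
  linarith

theorem sq_norm_gradient_step_sub_le (hL : 0 < L) {a b g h : E}
    (hmono : μ * ‖a - b‖ ^ 2 ≤ ⟪g - h, a - b⟫) (hco : 1 / L * ‖g - h‖ ^ 2 ≤ ⟪g - h, a - b⟫) :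
    ‖(a - (1 / L) • g) - (b - (1 / L) • h)‖ ^ 2 ≤ (1 - μ / L) * ‖a - b‖ ^ 2 := by
  have hc : 0 < 1 / L := by positivity
  rw [sub_sub_sub_comm, ← smul_sub, norm_sub_sq_real, real_inner_smul_right, norm_smul,
    mul_pow, Real.norm_of_nonneg hc.le, real_inner_comm]
  have hco' := mul_le_mul_of_nonneg_left hco hc.le
  have hmono' := mul_le_mul_of_nonneg_left hmono hc.le
  have hfactor : (1 - μ / L) * ‖a - b‖ ^ 2 = ‖a - b‖ ^ 2 - 1 / L * (μ * ‖a - b‖ ^ 2) := by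
    field_simp
  linarith

theorem IsMinOn.inner_gradient_sub_nonneg [CompleteSpace E] {s : Set E} {a g y : E}
    (hmin : IsMinOn f s a) (hs : Convex ℝ s) (ha : a ∈ s) (hg : HasGradientAt f g a)
    (hy : y ∈ s) : 0 ≤ ⟪g, y - a⟫ := by
  simpa using hmin.localize.hasFDerivWithinAt_nonneg hg.hasFDerivAt.hasFDerivWithinAt
    (sub_mem_posTangentConeAt_of_segment_subset (hs.segment_subset ha hy))

end SmoothConvex

section Orthant

variable {ι : Type*}

def orthant (ι : Type*) : Set (EuclideanSpace ℝ ι) := {x | ∀ i, 0 ≤ x i}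

def orthantProj (x : EuclideanSpace ℝ ι) : EuclideanSpace ℝ ι :=
  WithLp.toLp 2 fun i => max (x i) 0

@[simp]
theorem orthantProj_apply (x : EuclideanSpace ℝ ι) (i : ι) : orthantProj x i = max (x i) 0 :=
  rfl

theorem convex_orthant : Convex ℝ (orthant ι) := by
  intro x hx y hy a b ha hb _ i
  simpa using add_nonneg (mul_nonneg ha (hx i)) (mul_nonneg hb (hy i))

theorem norm_orthantProj_sub_le [Fintype ι] (x y : EuclideanSpace ℝ ι) :
    ‖orthantProj x - orthantProj y‖ ≤ ‖x - y‖ := by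
  refine le_of_sq_le_sq ?_ (norm_nonneg _)
  rw [EuclideanSpace.real_norm_sq_eq, EuclideanSpace.real_norm_sq_eq]
  refine Finset.sum_le_sum fun i _ => sq_le_sq.2 ?_
  simpa using abs_max_sub_max_le_abs (x i) (y i) 0

/-- The KKT conditions for the orthant. -/
theorem nonneg_and_mul_eq_zero_of_inner_nonneg [Fintype ι] {x g : EuclideanSpace ℝ ι}
    (hx : x ∈ orthant ι) (hvi : ∀ y ∈ orthant ι, 0 ≤ ⟪g, y - x⟫) (i : ι) :
    0 ≤ g i ∧ x i * g i = 0 := by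
  classical
  have hmove (c : ℝ) (hc : 0 ≤ x i + c) : 0 ≤ c * g i := by
    have hy : x + EuclideanSpace.single i c ∈ orthant ι := by
      intro j
      by_cases hji : j = i
      · subst hji; simpa using hc
      · simpa [PiLp.single_apply, hji] using hx j
    simpa [EuclideanSpace.inner_single_right, mul_comm] using hvi _ hy
  have hg : 0 ≤ g i := by simpa using hmove 1 (by linarith [hx i])
  refine ⟨hg, le_antisymm ?_ (mul_nonneg (hx i) hg)⟩
  simpa using hmove (-x i) (by simp)

theorem orthantProj_sub_smul_eq_self [Fintype ι] {x g : EuclideanSpace ℝ ι} (hx : x ∈ orthant ι)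
    (hvi : ∀ y ∈ orthant ι, 0 ≤ ⟪g, y - x⟫) {t : ℝ} (ht : 0 ≤ t) :
    orthantProj (x - t • g) = x := by
  ext i
  obtain ⟨hg, hslack⟩ := nonneg_and_mul_eq_zero_of_inner_nonneg hx hvi i
  rcases mul_eq_zero.1 hslack with hxi | hgi
  · simp [hxi, mul_nonneg ht hg]
  · simp [hgi, hx i]

end Orthant

theorem projected_gradient_linear_convergence_general
    (n : ℕ) (f : EuclideanSpace ℝ (Fin n) → ℝ)
    (f' : EuclideanSpace ℝ (Fin n) → EuclideanSpace ℝ (Fin n))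
    (hgrad : ∀ x, HasGradientAt f (f' x) x)
    (μ L : ℝ) (hμ : 0 < μ) (hμL : μ ≤ L)
    (hsc : ∀ x y : EuclideanSpace ℝ (Fin n),
      f x ≥ f y + ⟪f' y, x - y⟫ + μ / 2 * ‖x - y‖ ^ 2)
    (hlip : ∀ x y : EuclideanSpace ℝ (Fin n), ‖f' x - f' y‖ ≤ L * ‖x - y‖)
    (Q : Set (EuclideanSpace ℝ (Fin n)))
    (hQ : Q = {x : EuclideanSpace ℝ (Fin n) | ∀ i, 0 ≤ x i})
    (P : EuclideanSpace ℝ (Fin n) → EuclideanSpace ℝ (Fin n))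
    (hP : ∀ x i, P x i = max (x i) 0)
    (xstar : EuclideanSpace ℝ (Fin n)) (hxstarQ : xstar ∈ Q)
    (hmin : ∀ x ∈ Q, f xstar ≤ f x)
    (x : ℕ → EuclideanSpace ℝ (Fin n))
    (hiter : ∀ k : ℕ, x (k + 1) = P (x k - (1 / L) • f' (x k))) :
    ∀ k : ℕ, ‖x k - xstar‖ ^ 2 ≤ (1 - μ / L) ^ k * ‖x 0 - xstar‖ ^ 2 := by
  change Q = orthant (Fin n) at hQ
  subst hQ
  obtain rfl : P = orthantProj := funext fun v => by ext i; simp [hP]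
  have hL : 0 < L := hμ.trans_le hμL
  have hco := inv_mul_sq_norm_sub_le_inner hL (add_inner_le_of_strongly_convex hμ.le hsc)
    (le_add_inner_add_sq_of_lipschitz_gradient hgrad hlip)
  have hfix : orthantProj (xstar - (1 / L) • f' xstar) = xstar :=
    orthantProj_sub_smul_eq_self hxstarQ
      (fun _ hy => (isMinOn_iff.2 hmin).inner_gradient_sub_nonneg convex_orthant hxstarQ
        (hgrad xstar) hy) (by positivity)
  have hstep (j : ℕ) : ‖x (j + 1) - xstar‖ ^ 2 ≤ (1 - μ / L) * ‖x j - xstar‖ ^ 2 := calc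
    ‖x (j + 1) - xstar‖ ^ 2
        = ‖orthantProj (x j - (1 / L) • f' (x j))
            - orthantProj (xstar - (1 / L) • f' xstar)‖ ^ 2 := by
        rw [hiter, hfix]
    _ ≤ ‖(x j - (1 / L) • f' (x j)) - (xstar - (1 / L) • f' xstar)‖ ^ 2 := by
        gcongr
        exact norm_orthantProj_sub_le _ _
    _ ≤ (1 - μ / L) * ‖x j - xstar‖ ^ 2 :=
        sq_norm_gradient_step_sub_le hL (mul_sq_norm_sub_le_inner hsc _ _) (hco _ _)
  exact fun k => le_geom (u := fun k => ‖x k - xstar‖ ^ 2)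
    (by linarith [(div_le_one hL).2 hμL]) k fun j _ => hstep j

/-- Linear convergence of the projected gradient method (projection onto
the nonnegative orthant) for a strongly convex function with Lipschitz
continuous gradient. -/
theorem projected_gradient_linear_convergence
    (n : ℕ) (f : EuclideanSpace ℝ (Fin n) → ℝ)
    (f' : EuclideanSpace ℝ (Fin n) → EuclideanSpace ℝ (Fin n))
    (hgrad : ∀ x, HasGradientAt f (f' x) x)
    (μ L : ℝ) (hμ : 0 < μ) (hμL : μ ≤ L)
    (hsc : ∀ x y : EuclideanSpace ℝ (Fin n),
      f x ≥ f y + ⟪f' y, x - y⟫ + μ / 2 * ‖x - y‖ ^ 2)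
    (hlip : ∀ x y : EuclideanSpace ℝ (Fin n), ‖f' x - f' y‖ ≤ L * ‖x - y‖)
    (Q : Set (EuclideanSpace ℝ (Fin n)))
    (hQ : Q = {x : EuclideanSpace ℝ (Fin n) | ∀ i, 0 ≤ x i})
    (P : EuclideanSpace ℝ (Fin n) → EuclideanSpace ℝ (Fin n))
    (hP : ∀ x i, P x i = max (x i) 0)
    (xstar : EuclideanSpace ℝ (Fin n)) (hxstarQ : xstar ∈ Q)
    (hmin : ∀ x ∈ Q, f xstar ≤ f x)
    (x : ℕ → EuclideanSpace ℝ (Fin n)) (hx0 : x 0 ∈ Q)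
    (hiter : ∀ k : ℕ, x (k + 1) = P (x k - (1 / L) • f' (x k))) :
    ∀ k : ℕ, ‖x k - xstar‖ ^ 2 ≤ (1 - μ / L) ^ k * ‖x 0 - xstar‖ ^ 2 :=
  projected_gradient_linear_convergence_general n f f' hgrad μ L hμ hμL hsc hlip Q hQ P hP xstar
    hxstarQ hmin x hiter
end

section
/- Let f : ℝⁿ → ℝ be differentiable, μ-strongly convex and L-smooth with 0 < μ ≤ L, and let x* be a global minimizer of f. Set β = (√L − √μ)/(√L + √μ). Define Nesterov's constant-step iterates by y_0 = x_0, x_{k+1} = y_k − (1/L)∇f(y_k), and y_{k+1} = x_{k+1} + β(x_{k+1} − x_k). Then for every k ≥ 0, f(x_k) − f(x*) ≤ (1 − √(μ/L))^k · (f(x_0) − f(x*) + (μ/2)‖x_0 − x*‖²). -/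
open scoped RealInnerProductSpace

/-!
Lyapunov argument. With θ = √(μ/L) the momentum satisfies (1 + θ)β = 1 - θ, and along the
auxiliary sequence v₀ = x₀, v_{k+1} = x_k + θ⁻¹(x_{k+1} - x_k) one has x_k - y_k = θ(y_k - v_k) and
v_{k+1} = (1 - θ)v_k + θy_k - (θ/μ)∇f(y_k). The potential f(x_k) - f(x*) + (μ/2)‖v_k - x*‖²
then contracts by 1 - θ at each step: expand the square, bound f(x_{k+1}) by the smoothness
descent f(y) - ‖∇f(y)‖²/(2L) (which cancels the ‖∇f‖² term exactly because θ²L = μ), use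
convexity of ‖·‖², and combine the convexity inequality at x_k with weight 1 - θ and the strong
convexity inequality at x* with weight θ. The potential dominates f(x_k) - f(x*).
-/

section
variable {E : Type*} [NormedAddCommGroup E] [InnerProductSpace ℝ E]

lemma norm_smul_add_smul_sq_le (a b : E) {θ : ℝ} (hθ0 : 0 ≤ θ) (hθ1 : θ ≤ 1) :
    ‖(1 - θ) • a + θ • b‖ ^ 2 ≤ (1 - θ) * ‖a‖ ^ 2 + θ * ‖b‖ ^ 2 := by
  have h : ‖(1 - θ) • a + θ • b‖ ^ 2
      = (1 - θ) * ‖a‖ ^ 2 + θ * ‖b‖ ^ 2 - θ * (1 - θ) * ‖a - b‖ ^ 2 := by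
    rw [norm_add_sq_real, norm_sub_sq_real, norm_smul, norm_smul, real_inner_smul_left,
      real_inner_smul_right, Real.norm_of_nonneg hθ0, Real.norm_of_nonneg (sub_nonneg.2 hθ1)]
    ring
  have : 0 ≤ θ * (1 - θ) * ‖a - b‖ ^ 2 := by
    have := sub_nonneg.2 hθ1
    positivity
  linarith

variable {f : E → ℝ} {f' : E → E} {μ L : ℝ}

lemma le_sub_norm_sq_of_gradient_step (hL : 0 < L)
    (hsm : ∀ x y, f x ≤ f y + ⟪f' y, x - y⟫ + L / 2 * ‖x - y‖ ^ 2) (y : E) :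
    f (y - (1 / L) • f' y) ≤ f y - 1 / (2 * L) * ‖f' y‖ ^ 2 := by
  have h := hsm (y - (1 / L) • f' y) y
  rw [sub_sub_cancel_left, inner_neg_right, real_inner_smul_right, real_inner_self_eq_norm_sq,
    norm_neg, norm_smul, Real.norm_of_nonneg (by positivity)] at h
  convert h using 1
  field_simp
  ring

lemma nesterov_potential_step {θ : ℝ} (hμ : 0 < μ) (hθ0 : 0 < θ) (hθ1 : θ ≤ 1)
    (hθL : θ ^ 2 * L = μ)
    (hsc : ∀ x y, f x ≥ f y + ⟪f' y, x - y⟫ + μ / 2 * ‖x - y‖ ^ 2)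
    (hsm : ∀ x y, f x ≤ f y + ⟪f' y, x - y⟫ + L / 2 * ‖x - y‖ ^ 2)
    {x y v : E} (hxyv : x - y = θ • (y - v)) (xs : E) :
    f (y - (1 / L) • f' y) - f xs
        + μ / 2 * ‖(1 - θ) • v + θ • y - (θ / μ) • f' y - xs‖ ^ 2
      ≤ (1 - θ) * (f x - f xs + μ / 2 * ‖v - xs‖ ^ 2) := by
  have hL : 0 < L := pos_of_mul_pos_right (hθL ▸ hμ) (by positivity)
  set g := f' y
  set w := (1 - θ) • (v - xs) + θ • (y - xs)
  have hsplit : (1 - θ) • v + θ • y - (θ / μ) • g - xs = w - (θ / μ) • g := by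
    simp only [w]; module
  have hexpand : μ / 2 * ‖w - (θ / μ) • g‖ ^ 2
      = μ / 2 * ‖w‖ ^ 2 - θ * ⟪g, w⟫ + 1 / (2 * L) * ‖g‖ ^ 2 := by
    rw [norm_sub_sq_real, norm_smul, real_inner_smul_right, real_inner_comm,
      Real.norm_of_nonneg (by positivity)]
    have hsq : μ / 2 * (θ / μ) ^ 2 = 1 / (2 * L) := by
      rw [← hθL]; field_simp
    have hlin : μ / 2 * (θ / μ) = θ / 2 := by field_simp
    linear_combination (‖g‖ ^ 2) * hsq - 2 * ⟪g, w⟫ * hlin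
  have hconv := norm_smul_add_smul_sq_le (v - xs) (y - xs) hθ0.le hθ1
  have hinner : θ * ⟪g, w⟫ = θ * ⟪g, y - xs⟫ - (1 - θ) * ⟪g, x - y⟫ := by
    have : y - v = (y - xs) - (v - xs) := by abel
    rw [hxyv, this]
    simp only [w, inner_add_right, inner_sub_right, real_inner_smul_right]
    ring
  have hdesc := le_sub_norm_sq_of_gradient_step hL hsm y
  have hx : f y + ⟪g, x - y⟫ ≤ f x := by
    have := hsc x y
    have : 0 ≤ μ / 2 * ‖x - y‖ ^ 2 := by positivity
    linarith
  have hxs : f y - ⟪g, y - xs⟫ + μ / 2 * ‖y - xs‖ ^ 2 ≤ f xs := by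
    have h := hsc xs y
    rwa [← neg_sub y xs, inner_neg_right, norm_neg, ← sub_eq_add_neg] at h
  rw [hsplit]
  linarith [mul_le_mul_of_nonneg_left hx (sub_nonneg.2 hθ1),
    mul_le_mul_of_nonneg_left hxs hθ0.le,
    mul_le_mul_of_nonneg_left hconv (by positivity : 0 ≤ μ / 2)]

noncomputable def nesterovAux (θ : ℝ) (x : ℕ → E) : ℕ → E
  | 0 => x 0
  | k + 1 => x k + θ⁻¹ • (x (k + 1) - x k)

section Iterates

variable {θ β : ℝ} {x y : ℕ → E}

lemma sub_eq_smul_sub_nesterovAux (hθ : θ ≠ 0) (hβ : (1 + θ) * β = 1 - θ) (hy0 : y 0 = x 0)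
    (hy : ∀ k, y (k + 1) = x (k + 1) + β • (x (k + 1) - x k)) (k : ℕ) :
    x k - y k = θ • (y k - nesterovAux θ x k) := by
  cases k with
  | zero => simp [nesterovAux, hy0]
  | succ k =>
    rw [hy, nesterovAux]
    match_scalars
    · field_simp
      linear_combination -hβ
    · field_simp
      linear_combination hβ

lemma nesterovAux_succ (hθ : θ ≠ 0) (hθL : θ ^ 2 * L = μ)
    (hx : ∀ k, x (k + 1) = y k - (1 / L) • f' (y k))
    (hxyv : ∀ k, x k - y k = θ • (y k - nesterovAux θ x k)) (k : ℕ) :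
    nesterovAux θ x (k + 1) = (1 - θ) • nesterovAux θ x k + θ • y k - (θ / μ) • f' (y k) := by
  rw [nesterovAux, hx, eq_add_of_sub_eq (hxyv k), ← hθL]
  match_scalars
  · field_simp
    ring
  · field_simp
    ring
  · rcases eq_or_ne L 0 with rfl | hL <;> field_simp

theorem nesterov_potential_le (hμ : 0 < μ) (hθ0 : 0 < θ) (hθ1 : θ ≤ 1) (hθL : θ ^ 2 * L = μ)
    (hβ : (1 + θ) * β = 1 - θ)
    (hsc : ∀ x y, f x ≥ f y + ⟪f' y, x - y⟫ + μ / 2 * ‖x - y‖ ^ 2)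
    (hsm : ∀ x y, f x ≤ f y + ⟪f' y, x - y⟫ + L / 2 * ‖x - y‖ ^ 2)
    (hy0 : y 0 = x 0) (hx : ∀ k, x (k + 1) = y k - (1 / L) • f' (y k))
    (hy : ∀ k, y (k + 1) = x (k + 1) + β • (x (k + 1) - x k)) (xs : E) (k : ℕ) :
    f (x k) - f xs + μ / 2 * ‖nesterovAux θ x k - xs‖ ^ 2
      ≤ (1 - θ) ^ k * (f (x 0) - f xs + μ / 2 * ‖x 0 - xs‖ ^ 2) := by
  have hxyv := sub_eq_smul_sub_nesterovAux hθ0.ne' hβ hy0 hy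
  refine le_geom (u := fun k ↦ f (x k) - f xs + μ / 2 * ‖nesterovAux θ x k - xs‖ ^ 2)
    (sub_nonneg.2 hθ1) k fun j _ ↦ ?_
  simpa only [hx j, nesterovAux_succ hθ0.ne' hθL hx hxyv j] using
    nesterov_potential_step hμ hθ0 hθ1 hθL hsc hsm (hxyv j) xs

end Iterates
end

lemma one_add_sqrt_div_mul_momentum {μ L : ℝ} (hμ : 0 ≤ μ) (hL : 0 < L) :
    (1 + √(μ / L)) * ((√L - √μ) / (√L + √μ)) = 1 - √(μ / L) := by
  have : 0 < √L := Real.sqrt_pos.2 hL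
  rw [Real.sqrt_div hμ]
  field_simp

theorem nesterov_constant_step_convergence_general
    (n : ℕ) (f : EuclideanSpace ℝ (Fin n) → ℝ)
    (f' : EuclideanSpace ℝ (Fin n) → EuclideanSpace ℝ (Fin n))
    (μ L : ℝ) (hμ : 0 < μ) (hμL : μ ≤ L)
    (hsc : ∀ x y : EuclideanSpace ℝ (Fin n),
      f x ≥ f y + ⟪f' y, x - y⟫ + μ / 2 * ‖x - y‖ ^ 2)
    (hsm : ∀ x y : EuclideanSpace ℝ (Fin n),
      f x ≤ f y + ⟪f' y, x - y⟫ + L / 2 * ‖x - y‖ ^ 2)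
    (xstar : EuclideanSpace ℝ (Fin n))
    (β : ℝ) (hβ : β = (Real.sqrt L - Real.sqrt μ) / (Real.sqrt L + Real.sqrt μ))
    (x y : ℕ → EuclideanSpace ℝ (Fin n))
    (hy0 : y 0 = x 0)
    (hx : ∀ k : ℕ, x (k + 1) = y k - (1 / L) • f' (y k))
    (hy : ∀ k : ℕ, y (k + 1) = x (k + 1) + β • (x (k + 1) - x k)) :
    ∀ k : ℕ, f (x k) - f xstar ≤
      (1 - Real.sqrt (μ / L)) ^ k *
        (f (x 0) - f xstar + μ / 2 * ‖x 0 - xstar‖ ^ 2) := by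
  intro k
  have hL : 0 < L := hμ.trans_le hμL
  have hθ0 : 0 < √(μ / L) := Real.sqrt_pos.2 (div_pos hμ hL)
  have hθ1 : √(μ / L) ≤ 1 := Real.sqrt_le_one.2 ((div_le_one hL).2 hμL)
  have hθL : √(μ / L) ^ 2 * L = μ := by
    rw [Real.sq_sqrt (div_pos hμ hL).le]
    field_simp
  have hpot := nesterov_potential_le hμ hθ0 hθ1 hθL
    (hβ ▸ one_add_sqrt_div_mul_momentum hμ.le hL) hsc hsm hy0 hx hy xstar k
  have : 0 ≤ μ / 2 * ‖nesterovAux √(μ / L) x k - xstar‖ ^ 2 := by positivity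
  linarith

/-- Convergence rate of Nesterov's constant-step accelerated gradient method
for a μ-strongly convex, L-smooth function. -/
theorem nesterov_constant_step_convergence
    (n : ℕ) (f : EuclideanSpace ℝ (Fin n) → ℝ)
    (f' : EuclideanSpace ℝ (Fin n) → EuclideanSpace ℝ (Fin n))
    (hgrad : ∀ x, HasGradientAt f (f' x) x)
    (μ L : ℝ) (hμ : 0 < μ) (hμL : μ ≤ L)
    (hsc : ∀ x y : EuclideanSpace ℝ (Fin n),
      f x ≥ f y + ⟪f' y, x - y⟫ + μ / 2 * ‖x - y‖ ^ 2)
    (hsm : ∀ x y : EuclideanSpace ℝ (Fin n),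
      f x ≤ f y + ⟪f' y, x - y⟫ + L / 2 * ‖x - y‖ ^ 2)
    (xstar : EuclideanSpace ℝ (Fin n)) (hmin : ∀ x, f xstar ≤ f x)
    (β : ℝ) (hβ : β = (Real.sqrt L - Real.sqrt μ) / (Real.sqrt L + Real.sqrt μ))
    (x y : ℕ → EuclideanSpace ℝ (Fin n))
    (hy0 : y 0 = x 0)
    (hx : ∀ k : ℕ, x (k + 1) = y k - (1 / L) • f' (y k))
    (hy : ∀ k : ℕ, y (k + 1) = x (k + 1) + β • (x (k + 1) - x k)) :
    ∀ k : ℕ, f (x k) - f xstar ≤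
      (1 - Real.sqrt (μ / L)) ^ k *
        (f (x 0) - f xstar + μ / 2 * ‖x 0 - xstar‖ ^ 2) :=
  nesterov_constant_step_convergence_general n f f' μ L hμ hμL hsc hsm xstar β hβ x y hy0 hx hy
end

section
/- Let f : ℝⁿ → ℝ be convex and differentiable, let Q be the nonnegative orthant, let L > 0 and y ∈ ℝⁿ, and set x⁺ = P(y − (1/L)∇f(y)) and G = L(y − x⁺). Assume the descent condition f(x⁺) ≤ f(y) + ⟨∇f(y), x⁺ − y⟩ + (L/2)‖x⁺ − y‖² holds. Then for every x ∈ Q, f(x⁺) ≤ f(x) + ⟨G, y − x⟩ − (1/(2L))‖G‖². -/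
open scoped RealInnerProductSpace

/-!
The orthant projection `x⁺ = P z` of `z = y - (1/L)∇f(y)` satisfies the variational inequality
`⟪z - x⁺, x - x⁺⟫ ≤ 0` for `x ∈ Q`, coordinate by coordinate. Together with the descent condition
and the first-order characterisation of convexity `f y + ⟪∇f(y), x - y⟫ ≤ f x`, this gives the
estimate by pure algebra in `d = y - x⁺` and `w = x - x⁺`.
-/

theorem ConvexOn.add_inner_sub_le_of_hasGradientAt {F : Type*} [NormedAddCommGroup F]
    [InnerProductSpace ℝ F] [CompleteSpace F] {f : F → ℝ} {s : Set F} {g x y : F}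
    (hf : ConvexOn ℝ s f) (hy : y ∈ s) (hx : x ∈ s) (hg : HasGradientAt f g y) :
    f y + ⟪g, x - y⟫ ≤ f x := by
  let line := AffineMap.lineMap (k := ℝ) y x
  have hline : ConvexOn ℝ (line ⁻¹' s) (f ∘ line) := hf.comp_affineMap line
  have hderiv : HasDerivAt (f ∘ line) ⟪g, x - y⟫ 0 := by
    have hfderiv : HasFDerivAt f (InnerProductSpace.toDual ℝ F g) (line 0) := by
      simpa [line] using hg.hasFDerivAt
    simpa using hfderiv.comp_hasDerivAt 0 AffineMap.hasDerivAt_lineMap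
  have hslope : ⟪g, x - y⟫ ≤ f x - f y := by
    simpa [slope_def_field, line] using
      hline.le_slope_of_hasDerivAt (by simpa [line]) (by simpa [line]) zero_lt_one hderiv
  linarith

theorem mul_sub_max_zero_nonpos {a b : ℝ} (hb : 0 ≤ b) :
    (a - max a 0) * (b - max a 0) ≤ 0 := by
  rcases le_total 0 a with ha | ha
  · simp [max_eq_left ha]
  · rw [max_eq_right ha]; nlinarith

theorem inner_sub_sub_nonpos_of_eq_max_zero {ι : Type*} [Fintype ι]
    {z p x : EuclideanSpace ℝ ι} (hp : ∀ i, p i = max (z i) 0) (hx : ∀ i, 0 ≤ x i) :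
    ⟪z - p, x - p⟫ ≤ 0 := by
  rw [PiLp.inner_apply]
  refine Finset.sum_nonpos fun i _ => ?_
  simpa [hp, mul_comm] using mul_sub_max_zero_nonpos (a := z i) (hx i)

theorem le_add_inner_sub_gradientMap {E : Type*} [NormedAddCommGroup E] [InnerProductSpace ℝ E]
    {f : E → ℝ} {g x y xplus : E} {L : ℝ} (hL : 0 < L)
    (hproj : ⟪(y - (1 / L) • g) - xplus, x - xplus⟫ ≤ 0)
    (hsupport : f y + ⟪g, x - y⟫ ≤ f x)
    (hdesc : f xplus ≤ f y + ⟪g, xplus - y⟫ + L / 2 * ‖xplus - y‖ ^ 2) :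
    f xplus ≤ f x + ⟪L • (y - xplus), y - x⟫ - 1 / (2 * L) * ‖L • (y - xplus)‖ ^ 2 := by
  obtain ⟨d, rfl⟩ : ∃ d, y = xplus + d := ⟨y - xplus, by abel⟩
  obtain ⟨w, rfl⟩ : ∃ w, x = xplus + w := ⟨x - xplus, by abel⟩
  simp only [add_sub_cancel_left, add_sub_add_left_eq_sub, sub_add_cancel_left,
    inner_sub_left, inner_sub_right, inner_add_left, inner_neg_right, real_inner_smul_left,
    real_inner_self_eq_norm_sq, norm_neg, norm_smul, Real.norm_of_nonneg hL.le] at *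
  have hscaled : L * ⟪d, w⟫ ≤ ⟪g, w⟫ := by
    have := mul_le_mul_of_nonneg_left hproj hL.le
    field_simp at this
    linarith
  have hnorm : 1 / (2 * L) * (L * ‖d‖) ^ 2 = L / 2 * ‖d‖ ^ 2 := by field_simp
  linarith

/-- Key projected-gradient inequality: if the descent condition holds at the
projected step `x⁺ = P(y − (1/L)∇f(y))` with gradient map `G = L(y − x⁺)`,
then `f(x⁺) ≤ f(x) + ⟪G, y − x⟫ − (1/(2L))‖G‖²` for every `x` in the
nonnegative orthant `Q`. -/
theorem projected_gradient_key_inequality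
    (n : ℕ) (f : EuclideanSpace ℝ (Fin n) → ℝ)
    (f' : EuclideanSpace ℝ (Fin n) → EuclideanSpace ℝ (Fin n))
    (hgrad : ∀ x, HasGradientAt f (f' x) x)
    (hconv : ConvexOn ℝ Set.univ f)
    (Q : Set (EuclideanSpace ℝ (Fin n)))
    (hQ : Q = {x : EuclideanSpace ℝ (Fin n) | ∀ i, 0 ≤ x i})
    (P : EuclideanSpace ℝ (Fin n) → EuclideanSpace ℝ (Fin n))
    (hP : ∀ x i, P x i = max (x i) 0)
    (L : ℝ) (hL : 0 < L) (y : EuclideanSpace ℝ (Fin n))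
    (xplus : EuclideanSpace ℝ (Fin n))
    (hxplus : xplus = P (y - (1 / L) • f' y))
    (G : EuclideanSpace ℝ (Fin n)) (hG : G = L • (y - xplus))
    (hdesc : f xplus ≤ f y + ⟪f' y, xplus - y⟫ + L / 2 * ‖xplus - y‖ ^ 2) :
    ∀ x ∈ Q, f xplus ≤ f x + ⟪G, y - x⟫ - 1 / (2 * L) * ‖G‖ ^ 2 := by
  intro x hx
  subst hQ hG
  have hproj : ⟪(y - (1 / L) • f' y) - xplus, x - xplus⟫ ≤ 0 :=
    inner_sub_sub_nonpos_of_eq_max_zero (fun i => hxplus ▸ hP _ i) hx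
  have hsupport : f y + ⟪f' y, x - y⟫ ≤ f x :=
    hconv.add_inner_sub_le_of_hasGradientAt trivial trivial (hgrad y)
  exact le_add_inner_sub_gradientMap hL hproj hsupport hdesc
end

section
/- Let 0 < q ≤ 1 and let θ satisfy √q ≤ θ ≤ 1. Then the equation x² = (1 − x)θ² + q·x has a unique positive root θ⁺, and this root satisfies √q ≤ θ⁺ ≤ θ (hence also θ⁺ ≤ 1). -/
/-- The θ-recursion of Nesterov's method: for `0 < q ≤ 1` and
`√q ≤ θ ≤ 1`, the equation `x² = (1 − x)θ² + q x` has a unique positive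
root `θ⁺`, and it satisfies `√q ≤ θ⁺ ≤ θ`. -/
theorem theta_recursion_root
    (q θ : ℝ) (hq0 : 0 < q) (hq1 : q ≤ 1)
    (hθ1 : Real.sqrt q ≤ θ) (hθ2 : θ ≤ 1) :
    ∃ θplus : ℝ,
      (0 < θplus ∧ θplus ^ 2 = (1 - θplus) * θ ^ 2 + q * θplus) ∧
      (∀ x : ℝ, 0 < x → x ^ 2 = (1 - x) * θ ^ 2 + q * x → x = θplus) ∧
      Real.sqrt q ≤ θplus ∧ θplus ≤ θ := by
  have hsq : Real.sqrt q ^ 2 = q := Real.sq_sqrt hq0.le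
  have hsqpos : 0 < Real.sqrt q := Real.sqrt_pos.mpr hq0
  have hθpos : 0 < θ := lt_of_lt_of_le hsqpos hθ1
  have hq2 : q ≤ θ ^ 2 := by nlinarith [pow_le_pow_left₀ hsqpos.le hθ1 2]
  set b : ℝ := θ ^ 2 - q with hb
  set s : ℝ := Real.sqrt (b ^ 2 + 4 * θ ^ 2) with hsdef
  have hsnn : 0 ≤ s := Real.sqrt_nonneg _
  have hs : s ^ 2 = b ^ 2 + 4 * θ ^ 2 := Real.sq_sqrt (by positivity)
  set θplus : ℝ := (-b + s) / 2 with hθp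
  have hθppos : 0 < θplus := by
    have : b < s := by nlinarith
    simp only [hθp]; linarith
  have heq : θplus ^ 2 = (1 - θplus) * θ ^ 2 + q * θplus := by
    simp only [hθp, hb]; nlinarith
  refine ⟨θplus, ⟨hθppos, heq⟩, ?_, ?_, ?_⟩
  · intro x hx hxeq
    have hxb : x * (x + b) = θ ^ 2 := by simp only [hb]; nlinarith
    have hxbpos : 0 < x + b := by nlinarith
    have hfac : (x - θplus) * (x + θplus + b) = 0 := by nlinarith
    have : x + θplus + b > 0 := by linarith
    have := mul_eq_zero.mp hfac
    rcases this with h | h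
    · linarith
    · linarith
  · -- √q ≤ θplus
    have hf : Real.sqrt q ^ 2 + b * Real.sqrt q - θ ^ 2 ≤ 0 := by
      have h1 : Real.sqrt q ≤ 1 := by nlinarith
      nlinarith
    have hθpf : θplus ^ 2 + b * θplus - θ ^ 2 = 0 := by
      simp only [hb]; linear_combination heq
    have hbnn : 0 ≤ b := by simp only [hb]; linarith
    have kid : (Real.sqrt q - θplus) * (Real.sqrt q + θplus + b)
        = (Real.sqrt q ^ 2 + b * Real.sqrt q - θ ^ 2)
          - (θplus ^ 2 + b * θplus - θ ^ 2) := by ring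
    have key : (Real.sqrt q - θplus) * (Real.sqrt q + θplus + b) ≤ 0 := by
      rw [kid]; linarith
    by_contra h
    push_neg at h
    have h2 : (0:ℝ) < Real.sqrt q + θplus + b := by linarith
    exact absurd key (not_le.mpr (mul_pos (sub_pos.mpr h) h2))
  · -- θplus ≤ θ
    have hbnn : 0 ≤ b := by simp only [hb]; linarith
    have hf : θ ^ 2 + b * θ - θ ^ 2 ≥ 0 := by
      have := mul_nonneg hbnn hθpos.le; linarith
    have hθpf : θplus ^ 2 + b * θplus - θ ^ 2 = 0 := by
      simp only [hb]; linear_combination heq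
    have kid : (θplus - θ) * (θplus + θ + b)
        = (θplus ^ 2 + b * θplus - θ ^ 2) - (θ ^ 2 + b * θ - θ ^ 2) := by ring
    have key : (θplus - θ) * (θplus + θ + b) ≤ 0 := by rw [kid]; linarith
    by_contra h
    push_neg at h
    have h2 : (0:ℝ) < θplus + θ + b := by linarith
    exact absurd key (not_le.mpr (mul_pos (sub_pos.mpr h) h2))
end

section
/- Let f : ℝⁿ → ℝ be differentiable, μ-strongly convex and L-smooth with 0 < μ < L, and assume ∇f is Lipschitz continuous with constant L. Then for all x, y ∈ ℝⁿ: ⟨∇f(x) − ∇f(y), x − y⟩ ≥ (μL/(μ + L))‖x − y‖² + (1/(μ + L))‖∇f(x) − ∇f(y)‖². -/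
open scoped RealInnerProductSpace

section Aux

variable {E : Type*} [NormedAddCommGroup E] [InnerProductSpace ℝ E]

/-- Lower bound via gradient step: for convex K-smooth g. -/
lemma cocoercive_aux (g : E → ℝ) (g' : E → E) (K : ℝ) (hK : 0 < K)
    (hconv : ∀ x y : E, g x ≥ g y + ⟪g' y, x - y⟫)
    (hsm : ∀ x y : E, g x ≤ g y + ⟪g' y, x - y⟫ + K / 2 * ‖x - y‖ ^ 2) :
    ∀ x y : E, g y ≥ g x + ⟪g' x, y - x⟫ + 1 / (2 * K) * ‖g' x - g' y‖ ^ 2 := by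
  intro x y
  set z : E := y - (K⁻¹) • (g' y - g' x) with hz
  have h1 : g z ≥ g x + ⟪g' x, z - x⟫ := hconv z x
  have h2 : g z ≤ g y + ⟪g' y, z - y⟫ + K / 2 * ‖z - y‖ ^ 2 := hsm z y
  have hzy : z - y = -((K⁻¹) • (g' y - g' x)) := by rw [hz]; abel
  have e1 : ⟪g' y, z - y⟫ = -(K⁻¹ * ⟪g' y, g' y - g' x⟫) := by
    rw [hzy, inner_neg_right, real_inner_smul_right]
  have e2 : ‖z - y‖ ^ 2 = (K⁻¹) ^ 2 * ‖g' y - g' x‖ ^ 2 := by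
    rw [hzy, norm_neg, norm_smul, Real.norm_eq_abs, abs_of_pos (inv_pos.mpr hK)]
    ring
  have e3 : ⟪g' x, z - x⟫ = ⟪g' x, y - x⟫ - K⁻¹ * ⟪g' x, g' y - g' x⟫ := by
    have hx : z - x = (y - x) - (K⁻¹) • (g' y - g' x) := by rw [hz]; abel
    rw [hx, inner_sub_right, real_inner_smul_right]
  have e4 : K⁻¹ * ⟪g' y, g' y - g' x⟫ - K⁻¹ * ⟪g' x, g' y - g' x⟫
      = K⁻¹ * ‖g' y - g' x‖ ^ 2 := by
    rw [← mul_sub, ← inner_sub_left, real_inner_self_eq_norm_sq]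
  have e5 : ‖g' x - g' y‖ = ‖g' y - g' x‖ := norm_sub_rev _ _
  have hKi : K * K⁻¹ = 1 := mul_inv_cancel₀ hK.ne'
  have c1 : K / 2 * ((K⁻¹) ^ 2 * ‖g' y - g' x‖ ^ 2) = K⁻¹ / 2 * ‖g' y - g' x‖ ^ 2 := by
    linear_combination (K⁻¹ * ‖g' y - g' x‖ ^ 2 / 2) * hKi
  have c2 : 1 / (2 * K) * ‖g' y - g' x‖ ^ 2 = K⁻¹ / 2 * ‖g' y - g' x‖ ^ 2 := by
    rw [one_div, mul_inv]; ring
  rw [e1, e2, c1] at h2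
  rw [e3] at h1
  rw [e5, c2]
  linarith [h1, h2, e4]

lemma cocoercive (g : E → ℝ) (g' : E → E) (K : ℝ) (hK : 0 < K)
    (hconv : ∀ x y : E, g x ≥ g y + ⟪g' y, x - y⟫)
    (hsm : ∀ x y : E, g x ≤ g y + ⟪g' y, x - y⟫ + K / 2 * ‖x - y‖ ^ 2) :
    ∀ x y : E, ⟪g' x - g' y, x - y⟫ ≥ 1 / K * ‖g' x - g' y‖ ^ 2 := by
  intro x y
  have h1 := cocoercive_aux g g' K hK hconv hsm x y
  have h2 := cocoercive_aux g g' K hK hconv hsm y x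
  have e1 : ⟪g' x, y - x⟫ + ⟪g' y, x - y⟫ = -⟪g' x - g' y, x - y⟫ := by
    rw [inner_sub_left]
    have hyx : (y : E) - x = -(x - y) := by abel
    rw [hyx, inner_neg_right]
    ring
  have e2 : ‖g' y - g' x‖ = ‖g' x - g' y‖ := norm_sub_rev _ _
  rw [e2] at h2
  have h3 : 1 / (2 * K) * ‖g' x - g' y‖ ^ 2 + 1 / (2 * K) * ‖g' x - g' y‖ ^ 2
      = 1 / K * ‖g' x - g' y‖ ^ 2 := by
    rw [one_div, one_div, mul_inv]; ring
  linarith [h1, h2, e1, h3]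

end Aux

/-- Combined strong monotonicity / co-coercivity inequality for a function
that is μ-strongly convex and L-smooth with Lipschitz gradient. -/
theorem strong_convexity_smoothness_combined_inequality
    (n : ℕ) (f : EuclideanSpace ℝ (Fin n) → ℝ)
    (f' : EuclideanSpace ℝ (Fin n) → EuclideanSpace ℝ (Fin n))
    (hgrad : ∀ x, HasGradientAt f (f' x) x)
    (μ L : ℝ) (hμ : 0 < μ) (hμL : μ < L)
    (hsc : ∀ x y : EuclideanSpace ℝ (Fin n),
      f x ≥ f y + ⟪f' y, x - y⟫ + μ / 2 * ‖x - y‖ ^ 2)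
    (hsm : ∀ x y : EuclideanSpace ℝ (Fin n),
      f x ≤ f y + ⟪f' y, x - y⟫ + L / 2 * ‖x - y‖ ^ 2)
    (hlip : ∀ x y : EuclideanSpace ℝ (Fin n), ‖f' x - f' y‖ ≤ L * ‖x - y‖) :
    ∀ x y : EuclideanSpace ℝ (Fin n),
      ⟪f' x - f' y, x - y⟫ ≥
        μ * L / (μ + L) * ‖x - y‖ ^ 2 + 1 / (μ + L) * ‖f' x - f' y‖ ^ 2 := by
  intro x y
  set g : EuclideanSpace ℝ (Fin n) → ℝ := fun z => f z - μ / 2 * ‖z‖ ^ 2 with hg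
  set g' : EuclideanSpace ℝ (Fin n) → EuclideanSpace ℝ (Fin n) :=
    fun z => f' z - μ • z with hg'
  have hK : (0 : ℝ) < L - μ := by linarith
  have key : ∀ a b : EuclideanSpace ℝ (Fin n),
      ‖a‖ ^ 2 = ‖b‖ ^ 2 + 2 * ⟪b, a - b⟫ + ‖a - b‖ ^ 2 := by
    intro a b
    have hab : a = b + (a - b) := by abel
    nth_rewrite 1 [hab]
    rw [norm_add_sq_real]
  have hconv : ∀ a b, g a ≥ g b + ⟪g' b, a - b⟫ := by
    intro a b
    have h := hsc a b
    have hk := key a b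
    simp only [hg, hg', inner_sub_left, real_inner_smul_left]
    nlinarith [h, hk]
  have hsm2 : ∀ a b, g a ≤ g b + ⟪g' b, a - b⟫ + (L - μ) / 2 * ‖a - b‖ ^ 2 := by
    intro a b
    have h := hsm a b
    have hk := key a b
    simp only [hg, hg', inner_sub_left, real_inner_smul_left]
    nlinarith [h, hk]
  have hco := cocoercive g g' (L - μ) hK hconv hsm2 x y
  have egx : g' x - g' y = (f' x - f' y) - μ • (x - y) := by
    simp only [hg']; module
  rw [egx] at hco
  have e1 : ⟪(f' x - f' y) - μ • (x - y), x - y⟫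
      = ⟪f' x - f' y, x - y⟫ - μ * ‖x - y‖ ^ 2 := by
    rw [inner_sub_left, real_inner_smul_left, real_inner_self_eq_norm_sq]
  have e2 : ‖(f' x - f' y) - μ • (x - y)‖ ^ 2
      = ‖f' x - f' y‖ ^ 2 - 2 * μ * ⟪f' x - f' y, x - y⟫ + μ ^ 2 * ‖x - y‖ ^ 2 := by
    rw [norm_sub_sq_real, real_inner_smul_right, norm_smul, Real.norm_eq_abs, abs_of_pos hμ]
    ring
  rw [e1, e2] at hco
  have hμLpos : (0 : ℝ) < μ + L := by linarith
  set t := ⟪f' x - f' y, x - y⟫ with ht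
  set a := ‖x - y‖ ^ 2 with ha
  set b := ‖f' x - f' y‖ ^ 2 with hb
  -- hco : 1/(L-μ) * (b - 2μt + μ²a) ≤ t - μa  (as ≥ flipped)
  have h' : b - 2 * μ * t + μ ^ 2 * a ≤ (L - μ) * (t - μ * a) := by
    have hm := mul_le_mul_of_nonneg_left hco hK.le
    have hc : (L - μ) * (1 / (L - μ) * (b - 2 * μ * t + μ ^ 2 * a))
        = b - 2 * μ * t + μ ^ 2 * a := by
      field_simp
    rw [ge_iff_le] at hco
    nlinarith [hco, hK]
  rw [ge_iff_le, show μ * L / (μ + L) * a + 1 / (μ + L) * b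
      = (μ * L * a + b) / (μ + L) by ring, div_le_iff₀ hμLpos]
  nlinarith [h']
end
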